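/- If f : ℝ → ℝ is twice continuously differentiable at x, then the limit as Δ → 0 of −(1/2)·((2x+3Δ)f(x) − (4x+4Δ)f(x+Δ) + (2x+Δ)f(x+2Δ))/Δ² exists and equals f'(x) − x·f''(x). -/

import Mathlib

open Filter Topology Asymptotics

/-!
By the Peano form of Taylor's theorem, `f (x + cΔ) = f x + cΔ f'(x) + (cΔ)²/2 f''(x) + o(Δ²)`.
Substituting `c = 1, 2` into the quotient, the `f x` terms cancel, the `f'` and `f''` terms
contribute exactly `f'(x) - x f''(x)`, and what is left is a bounded multiple of `o(Δ²)/Δ²`.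
-/

section Taylor

variable {E : Type*} [NormedAddCommGroup E]

theorem Asymptotics.IsLittleO.comp_const_mul_pow {R : ℝ → E} {n : ℕ}
    (hR : R =o[𝓝 0] fun h => h ^ n) (c : ℝ) : (fun h => R (c * h)) =o[𝓝 0] fun h => h ^ n := by
  have hc : Tendsto (fun h : ℝ => c * h) (𝓝 0) (𝓝 0) := by
    simpa using (tendsto_id (x := 𝓝 (0 : ℝ))).const_mul c
  refine (hR.comp_tendsto hc).trans_isBigO ?_
  simpa [Function.comp_def, mul_pow] using
    (isBigO_refl (fun h : ℝ => h ^ n) (𝓝 0)).const_mul_left (c ^ n)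

variable [NormedSpace ℝ E]

theorem HasDerivAt.isLittleO_taylor_two {f f' : ℝ → E} {f'' : E} {x : ℝ}
    (hf : ∀ᶠ y in 𝓝 x, HasDerivAt f (f' y) y) (hf' : HasDerivAt f' f'' x) :
    (fun h : ℝ => f (x + h) - f x - h • f' x - (h ^ 2 / 2) • f'') =o[𝓝 0] fun h => h ^ 2 := by
  obtain ⟨ε, hε, hball⟩ := Metric.eventually_nhds_iff_ball.mp hf
  have hnhds : 𝓝[Metric.ball x ε] x = 𝓝 x := nhdsWithin_eq_nhds.mpr (Metric.ball_mem_nhds x hε)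
  set g : ℝ → E := fun y => f y - (y - x) • f' x - ((y - x) ^ 2 / 2) • f''
  have hg : ∀ y ∈ Metric.ball x ε,
      HasDerivWithinAt g (f' y - f' x - (y - x) • f'') (Metric.ball x ε) y := by
    intro y hy
    have hlin := ((hasDerivAt_id' y).sub_const x).smul_const (f' x)
    have hquad := ((((hasDerivAt_id' y).sub_const x).fun_pow 2).div_const 2).smul_const f''
    exact ((((hball y hy).sub hlin).sub hquad).congr_deriv (by simp)).hasDerivWithinAt
  have hg' : (fun y => f' y - f' x - (y - x) • f'') =o[𝓝[Metric.ball x ε] x]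
      fun y => (y - x) ^ 1 := by
    simpa [hnhds] using hf'.isLittleO
  -- The remainder's derivative is `o(y - x)`; the mean value theorem on the ball upgrades
  -- this to `o((y - x)²)` for the remainder itself.
  have hsq := (convex_ball x ε).isLittleO_pow_succ_real (Metric.mem_ball_self hε) hg hg'
  rw [hnhds] at hsq
  have hshift : Tendsto (fun h : ℝ => x + h) (𝓝 0) (𝓝 x) := by
    simpa using (tendsto_id (x := 𝓝 (0 : ℝ))).const_add x
  refine (hsq.comp_tendsto hshift).congr (fun h => ?_) (fun h => ?_)
  · simp [g]
    abel
  · simp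

end Taylor

theorem parabolic_derivative_a1 (f : ℝ → ℝ) (x : ℝ) (hf : ContDiffAt ℝ 2 f x) :
    Tendsto (fun Δ : ℝ =>
        -(1 / 2) * ((2 * x + 3 * Δ) * f x - (4 * x + 4 * Δ) * f (x + Δ)
          + (2 * x + Δ) * f (x + 2 * Δ)) / Δ ^ 2)
      (𝓝[≠] 0) (𝓝 (deriv f x - x * iteratedDeriv 2 f x)) := by
  have hf₁ : ∀ᶠ y in 𝓝 x, HasDerivAt f (deriv f y) y :=
    (hf.eventually (by simp)).mono fun y hy => (hy.differentiableAt (by simp)).hasDerivAt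
  have hf₂ : HasDerivAt (deriv f) (iteratedDeriv 2 f x) x := by
    rw [iteratedDeriv_succ, iteratedDeriv_one]
    exact ((hf.derivWithin (m := 1) (by norm_num)).differentiableAt (by simp)).hasDerivAt
  set f₁ := deriv f x
  set f₂ := iteratedDeriv 2 f x
  set R : ℝ → ℝ := fun h => f (x + h) - f x - h * f₁ - h ^ 2 / 2 * f₂
  have hR : ∀ c : ℝ, Tendsto (fun Δ => R (c * Δ) / Δ ^ 2) (𝓝[≠] 0) (𝓝 0) := fun c =>
    ((hf₂.isLittleO_taylor_two hf₁).comp_const_mul_pow c).tendsto_div_nhds_zero.mono_left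
      nhdsWithin_le_nhds
  have hlin : ∀ a b : ℝ, Tendsto (fun Δ => a + b * Δ) (𝓝[≠] 0) (𝓝 a) := fun a b =>
    ((by fun_prop : Continuous fun Δ : ℝ => a + b * Δ).tendsto' 0 a (by simp)).mono_left
      nhdsWithin_le_nhds
  have hlim := (tendsto_const_nhds (x := f₁ - x * f₂)).add
    ((((hlin (4 * x) 4).mul (hR 1)).sub ((hlin (2 * x) 1).mul (hR 2))).div_const 2)
  simp only [mul_zero, sub_zero, zero_div, add_zero] at hlim
  refine hlim.congr' (eventually_nhdsWithin_of_forall fun Δ (hΔ : Δ ≠ 0) => ?_)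
  simp only [R, one_mul]
  field_simp
  ring
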